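/- arXiv:math-ph/0405021 — 5 statements merged into one kernel-verified Lean document; each statement's English description precedes it below -/
import Mathlib

section
/- For every complex number z with positive real part, Re(coth(z)) ≥ Re(1/z). -/
/-!
Writing `z = x + iy`, one has `Re (coth z) = sinh x cosh x / (sinh² x + sin² y)` and
`Re (1 / z) = x / (x² + y²)`. After cross-multiplying, the inequality splits into
`x sinh² x ≤ x² sinh x cosh x`, which is `tanh x ≤ x`, and `x sin² y ≤ y² sinh x cosh x`,
which follows from `sin² y ≤ y²` and `x ≤ sinh x ≤ sinh x cosh x`.
-/

namespace Real

theorem sinh_le_mul_cosh {x : ℝ} (hx : 0 ≤ x) : sinh x ≤ x * cosh x := by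
  have hderiv (t : ℝ) : HasDerivAt (fun t ↦ t * cosh t - sinh t) (t * sinh t) t :=
    (((hasDerivAt_id t).mul (hasDerivAt_cosh t)).sub (hasDerivAt_sinh t)).congr_deriv
      (by simp)
  have hmono : MonotoneOn (fun t ↦ t * cosh t - sinh t) (Set.Ici 0) := by
    refine monotoneOn_of_deriv_nonneg (convex_Ici 0) ?_ ?_ ?_
    · exact fun t _ ↦ (hderiv t).continuousAt.continuousWithinAt
    · exact fun t _ ↦ (hderiv t).differentiableAt.differentiableWithinAt
    · intro t ht
      rw [interior_Ici] at ht
      rw [(hderiv t).deriv]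
      exact mul_nonneg ht.le (sinh_nonneg_iff.2 ht.le)
  simpa using hmono Set.self_mem_Ici hx hx

theorem self_le_sinh_mul_cosh {x : ℝ} (hx : 0 ≤ x) : x ≤ sinh x * cosh x :=
  (self_le_sinh_iff.2 hx).trans <| le_mul_of_one_le_right (sinh_nonneg_iff.2 hx) (one_le_cosh x)

theorem div_le_sinh_mul_cosh_div {x : ℝ} (hx : 0 < x) (y : ℝ) :
    x / (x ^ 2 + y ^ 2) ≤ sinh x * cosh x / (sinh x ^ 2 + sin y ^ 2) := by
  have hsinh : 0 < sinh x := sinh_pos_iff.2 hx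
  rw [div_le_div_iff₀ (by positivity) (by positivity)]
  have hsinh_sq : x * sinh x ^ 2 ≤ x ^ 2 * (sinh x * cosh x) := by
    have := mul_le_mul_of_nonneg_left (sinh_le_mul_cosh hx.le) (mul_nonneg hx.le hsinh.le)
    linarith
  have hsin_sq : x * sin y ^ 2 ≤ y ^ 2 * (sinh x * cosh x) :=
    calc x * sin y ^ 2 ≤ x * y ^ 2 := mul_le_mul_of_nonneg_left sin_sq_le_sq hx.le
      _ ≤ y ^ 2 * (sinh x * cosh x) := by
        rw [mul_comm]; exact mul_le_mul_of_nonneg_left (self_le_sinh_mul_cosh hx.le) (sq_nonneg y)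
  linarith

end Real

namespace Complex

theorem sinh_eq (z : ℂ) : sinh z = sinh z.re * cos z.im + cosh z.re * sin z.im * I := by
  conv_lhs => rw [← re_add_im z]
  rw [sinh_add, sinh_mul_I, cosh_mul_I]; ring

theorem cosh_eq (z : ℂ) : cosh z = cosh z.re * cos z.im + sinh z.re * sin z.im * I := by
  conv_lhs => rw [← re_add_im z]
  rw [cosh_add, sinh_mul_I, cosh_mul_I]; ring

theorem sinh_re (z : ℂ) : (sinh z).re = Real.sinh z.re * Real.cos z.im := by
  rw [sinh_eq]; simp [← ofReal_sinh, ← ofReal_cos, ← ofReal_cosh, ← ofReal_sin]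

theorem sinh_im (z : ℂ) : (sinh z).im = Real.cosh z.re * Real.sin z.im := by
  rw [sinh_eq]; simp [← ofReal_sinh, ← ofReal_cos, ← ofReal_cosh, ← ofReal_sin]

theorem cosh_re (z : ℂ) : (cosh z).re = Real.cosh z.re * Real.cos z.im := by
  rw [cosh_eq]; simp [← ofReal_sinh, ← ofReal_cos, ← ofReal_cosh, ← ofReal_sin]

theorem cosh_im (z : ℂ) : (cosh z).im = Real.sinh z.re * Real.sin z.im := by
  rw [cosh_eq]; simp [← ofReal_sinh, ← ofReal_cos, ← ofReal_cosh, ← ofReal_sin]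

theorem normSq_sinh (z : ℂ) : normSq (sinh z) = Real.sinh z.re ^ 2 + Real.sin z.im ^ 2 := by
  rw [normSq_apply, sinh_re, sinh_im]
  linear_combination Real.sinh z.re ^ 2 * Real.cos_sq_add_sin_sq z.im
    + Real.sin z.im ^ 2 * Real.cosh_sq_sub_sinh_sq z.re

theorem re_cosh_div_sinh (z : ℂ) :
    (cosh z / sinh z).re =
      Real.sinh z.re * Real.cosh z.re / (Real.sinh z.re ^ 2 + Real.sin z.im ^ 2) := by
  rw [div_re, normSq_sinh, ← add_div, sinh_re, sinh_im, cosh_re, cosh_im]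
  congr 1
  linear_combination Real.sinh z.re * Real.cosh z.re * Real.cos_sq_add_sin_sq z.im

end Complex

theorem coth_re_ge (z : ℂ) (hz : 0 < z.re) :
    (Complex.cosh z / Complex.sinh z).re ≥ (1 / z).re := by
  rw [Complex.re_cosh_div_sinh, one_div, Complex.inv_re, Complex.normSq_apply, ← sq, ← sq]
  exact Real.div_le_sinh_mul_cosh_div hz z.im
end

section
/- For every complex number z with positive real part, |coth(z)| ≤ e^{-Re(z)}/Re(z) + 1. -/
theorem coth_norm_le (z : ℂ) (hz : 0 < z.re) :
    ‖Complex.cosh z / Complex.sinh z‖ ≤ Real.exp (-z.re) / z.re + 1 := by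
  set x := z.re with hx
  have hsinh_pos : 0 < Real.sinh x := Real.sinh_pos_iff.mpr hz
  have hez : ‖Complex.exp z‖ = Real.exp x := Complex.norm_exp z
  have henz : ‖Complex.exp (-z)‖ = Real.exp (-x) :=
    (Complex.norm_exp (-z)).trans (by simp [hx])
  have h1 : ‖Complex.cosh z‖ ≤ Real.cosh x := by
    rw [Complex.cosh, Real.cosh_eq]
    calc ‖(Complex.exp z + Complex.exp (-z)) / 2‖
        = ‖Complex.exp z + Complex.exp (-z)‖ / 2 := by
          rw [norm_div]; norm_num
      _ ≤ (‖Complex.exp z‖ + ‖Complex.exp (-z)‖) / 2 := by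
          gcongr; exact norm_add_le _ _
      _ = (Real.exp x + Real.exp (-x)) / 2 := by rw [hez, henz]
  have h2 : Real.sinh x ≤ ‖Complex.sinh z‖ := by
    rw [Complex.sinh, Real.sinh_eq]
    calc (Real.exp x - Real.exp (-x)) / 2
        = (‖Complex.exp z‖ - ‖Complex.exp (-z)‖) / 2 := by rw [hez, henz]
      _ ≤ ‖Complex.exp z - Complex.exp (-z)‖ / 2 := by
          gcongr; exact norm_sub_norm_le _ _
      _ = ‖(Complex.exp z - Complex.exp (-z)) / 2‖ := by
          rw [norm_div]; norm_num
  rw [norm_div]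
  calc ‖Complex.cosh z‖ / ‖Complex.sinh z‖
      ≤ Real.cosh x / Real.sinh x :=
        div_le_div₀ (Real.cosh_pos x).le h1 hsinh_pos h2
    _ = Real.exp (-x) / Real.sinh x + 1 := by
        field_simp
        rw [← Real.cosh_sub_sinh x]; ring
    _ ≤ Real.exp (-x) / x + 1 := by
        gcongr
        exact (Real.self_lt_sinh_iff.mpr hz).le
end

section
/- Let Π be an orthogonal projection on a Hilbert space, Σ = 2Π - 1, and U a unitary operator such that [Σ, U] is a Hilbert–Schmidt operator. Then Π - Π U* Π U Π and Π - Π U Π U* Π are trace class operators. -/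
open ContinuousLinearMap

/-- A bounded operator is Hilbert–Schmidt if the sum of `‖T e i‖²` over some
Hilbert basis is finite. -/
def IsHilbertSchmidt {H : Type} [NormedAddCommGroup H] [InnerProductSpace ℂ H]
    [CompleteSpace H] (T : H →L[ℂ] H) : Prop :=
  ∃ (ι : Type) (e : HilbertBasis ι ℂ H), Summable fun i => ‖T (e i)‖ ^ 2

/-- A bounded operator is trace class iff it is the product of two
Hilbert–Schmidt operators. -/
def IsTraceClass {H : Type} [NormedAddCommGroup H] [InnerProductSpace ℂ H]
    [CompleteSpace H] (T : H →L[ℂ] H) : Prop :=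
  ∃ A B : H →L[ℂ] H, IsHilbertSchmidt A ∧ IsHilbertSchmidt B ∧ T = A * B

/-!
With `Σ = 2P - 1` one has the ring identity `P [Σ, A] [Σ, B] P = 4 (P A P B P - P A B P)`
for every idempotent `P`, so when `A B = 1` the operator `P - P A P B P` equals
`-1/4 · (P [Σ, A]) ([Σ, B] P)`. Hilbert–Schmidt operators form a two-sided ideal closed under
adjoints, and `[Σ, U*] = -[Σ, U]*` because `Σ` is self-adjoint, so both factors are
Hilbert–Schmidt for `(A, B) = (U*, U)` and `(U, U*)`.
-/

open scoped ENNReal InnerProductSpace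

theorem HilbertBasis.hasSum_norm_inner_sq {ι 𝕜 E : Type*} [RCLike 𝕜] [NormedAddCommGroup E]
    [InnerProductSpace 𝕜 E] (b : HilbertBasis ι 𝕜 E) (x : E) :
    HasSum (fun i => ‖⟪b i, x⟫_𝕜‖ ^ 2) (‖x‖ ^ 2) := by
  have h := b.hasSum_inner_mul_inner x x
  rw [inner_self_eq_norm_sq_to_K] at h
  simp only [← inner_conj_symm x (b _), RCLike.conj_mul] at h
  exact_mod_cast h

theorem HilbertBasis.tsum_enorm_inner_sq {ι 𝕜 E : Type*} [RCLike 𝕜] [NormedAddCommGroup E]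
    [InnerProductSpace 𝕜 E] (b : HilbertBasis ι 𝕜 E) (x : E) :
    ∑' i, ‖⟪b i, x⟫_𝕜‖ₑ ^ 2 = ‖x‖ₑ ^ 2 := by
  have h := b.hasSum_norm_inner_sq x
  simp only [← ofReal_norm, ← ENNReal.ofReal_pow (norm_nonneg _)]
  rw [← ENNReal.ofReal_tsum_of_nonneg (fun i => by positivity) h.summable, h.tsum_eq]

theorem HilbertBasis.tsum_enorm_adjoint_apply_sq {ι κ 𝕜 E F : Type*} [RCLike 𝕜]
    [NormedAddCommGroup E] [InnerProductSpace 𝕜 E] [CompleteSpace E]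
    [NormedAddCommGroup F] [InnerProductSpace 𝕜 F] [CompleteSpace F]
    (b : HilbertBasis ι 𝕜 E) (c : HilbertBasis κ 𝕜 F) (T : E →L[𝕜] F) :
    ∑' k, ‖adjoint T (c k)‖ₑ ^ 2 = ∑' i, ‖T (b i)‖ₑ ^ 2 :=
  -- in `ℝ≥0∞` the double series can be swapped without any summability hypothesis
  calc ∑' k, ‖adjoint T (c k)‖ₑ ^ 2
      = ∑' k, ∑' i, ‖⟪b i, adjoint T (c k)⟫_𝕜‖ₑ ^ 2 := by
        simp only [b.tsum_enorm_inner_sq]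
    _ = ∑' i, ∑' k, ‖⟪c k, T (b i)⟫_𝕜‖ₑ ^ 2 := by
        rw [ENNReal.tsum_comm]
        simp only [adjoint_inner_right, ← inner_conj_symm (c _), RCLike.enorm_conj]
    _ = ∑' i, ‖T (b i)‖ₑ ^ 2 := by simp only [c.tsum_enorm_inner_sq]

theorem summable_norm_sq_iff_tsum_enorm_sq_ne_top {ι E : Type*} [SeminormedAddCommGroup E]
    {f : ι → E} : Summable (fun i => ‖f i‖ ^ 2) ↔ ∑' i, ‖f i‖ₑ ^ 2 ≠ ∞ := by
  simp only [enorm_eq_nnnorm, ← ENNReal.coe_pow, ENNReal.tsum_coe_ne_top_iff_summable,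
    ← NNReal.summable_coe, NNReal.coe_pow, coe_nnnorm]

theorem IsSelfAdjoint.star_mul_sub_mul {R : Type*} [Ring R] [StarRing R] {S : R}
    (hS : IsSelfAdjoint S) (A : R) : star (S * A - A * S) = -(S * star A - star A * S) := by
  rw [star_sub, star_mul, star_mul, hS.star_eq, neg_sub]

theorem proj_mul_commutator_mul_commutator_mul_proj {R : Type*} [Ring R] {P : R}
    (hP : P * P = P) (A B : R) :
    P * ((2 • P - 1) * A - A * (2 • P - 1)) * ((2 • P - 1) * B - B * (2 • P - 1)) * P
      = 4 • (P * A * P * B * P - P * A * B * P) := by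
  have hP' : ∀ x : R, P * (P * x) = P * x := fun x => by rw [← mul_assoc, hP]
  simp only [two_smul, mul_sub, sub_mul, mul_add, add_mul, mul_assoc, hP, hP', mul_one, one_mul]
  abel

section HilbertSchmidt

variable {H : Type} [NormedAddCommGroup H] [InnerProductSpace ℂ H] [CompleteSpace H]
  {T : H →L[ℂ] H}

theorem IsHilbertSchmidt.adjoint (hT : IsHilbertSchmidt T) : IsHilbertSchmidt (adjoint T) := by
  obtain ⟨ι, e, hsum⟩ := hT
  refine ⟨ι, e, ?_⟩
  rw [summable_norm_sq_iff_tsum_enorm_sq_ne_top, e.tsum_enorm_adjoint_apply_sq e]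
  exact summable_norm_sq_iff_tsum_enorm_sq_ne_top.1 hsum

theorem IsHilbertSchmidt.neg (hT : IsHilbertSchmidt T) : IsHilbertSchmidt (-T) := by
  obtain ⟨ι, e, hsum⟩ := hT
  exact ⟨ι, e, by simpa only [neg_apply, norm_neg] using hsum⟩

theorem IsHilbertSchmidt.mul_left (B : H →L[ℂ] H) (hT : IsHilbertSchmidt T) :
    IsHilbertSchmidt (B * T) := by
  obtain ⟨ι, e, hsum⟩ := hT
  refine ⟨ι, e, .of_nonneg_of_le (fun i => by positivity) (fun i => ?_)
    (hsum.mul_left (‖B‖ ^ 2))⟩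
  rw [← mul_pow]
  exact pow_le_pow_left₀ (norm_nonneg _) (B.le_opNorm _) 2

theorem IsHilbertSchmidt.mul_right (B : H →L[ℂ] H) (hT : IsHilbertSchmidt T) :
    IsHilbertSchmidt (T * B) := by
  simpa only [← star_eq_adjoint, star_mul, star_star] using
    (hT.adjoint.mul_left (star B)).adjoint

theorem isTraceClass_proj_sub_of_isHilbertSchmidt_commutator {P A B : H →L[ℂ] H}
    (hP : P * P = P) (hAB : A * B = 1)
    (hA : IsHilbertSchmidt ((2 • P - 1) * A - A * (2 • P - 1)))
    (hB : IsHilbertSchmidt ((2 • P - 1) * B - B * (2 • P - 1))) :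
    IsTraceClass (P - P * A * P * B * P) := by
  refine ⟨((-4⁻¹ : ℂ) • P) * ((2 • P - 1) * A - A * (2 • P - 1)),
    ((2 • P - 1) * B - B * (2 • P - 1)) * P, hA.mul_left _, hB.mul_right _, ?_⟩
  simp only [smul_mul_assoc, ← mul_assoc]
  rw [proj_mul_commutator_mul_commutator_mul_proj hP, mul_assoc P A B, hAB, mul_one, hP,
    ← Nat.cast_smul_eq_nsmul ℂ, smul_smul]
  norm_num

end HilbertSchmidt

theorem proj_unitary_traceclass_general
    {H : Type} [NormedAddCommGroup H] [InnerProductSpace ℂ H] [CompleteSpace H]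
    (P U : H →L[ℂ] H) (hP : P * P = P) (hPsa : adjoint P = P)
    (hU : U * adjoint U = 1) (hU' : adjoint U * U = 1)
    (hHS : IsHilbertSchmidt ((2 • P - 1) * U - U * (2 • P - 1))) :
    IsTraceClass (P - P * adjoint U * P * U * P) ∧
    IsTraceClass (P - P * U * P * adjoint U * P) := by
  have hS : IsSelfAdjoint (2 • P - 1) := by
    have hP_sa : IsSelfAdjoint P := isSelfAdjoint_iff'.2 hPsa
    rw [two_smul]
    exact (hP_sa.add hP_sa).sub (.one _)
  have hHS' : IsHilbertSchmidt ((2 • P - 1) * adjoint U - adjoint U * (2 • P - 1)) := by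
    rw [← star_eq_adjoint, ← neg_neg (_ - _), ← hS.star_mul_sub_mul]
    exact hHS.adjoint.neg
  exact ⟨isTraceClass_proj_sub_of_isHilbertSchmidt_commutator hP hU' hHS' hHS,
    isTraceClass_proj_sub_of_isHilbertSchmidt_commutator hP hU hHS hHS'⟩

theorem proj_unitary_traceclass
    {H : Type} [NormedAddCommGroup H] [InnerProductSpace ℂ H] [CompleteSpace H]
    [TopologicalSpace.SeparableSpace H]
    (P U : H →L[ℂ] H) (hP : P * P = P) (hPsa : adjoint P = P)
    (hU : U * adjoint U = 1) (hU' : adjoint U * U = 1)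
    (hHS : IsHilbertSchmidt ((2 • P - 1) * U - U * (2 • P - 1))) :
    IsTraceClass (P - P * adjoint U * P * U * P) ∧
    IsTraceClass (P - P * U * P * adjoint U * P) :=
  proj_unitary_traceclass_general P U hP hPsa hU hU' hHS
end

section
/- Let Π be an orthogonal projection on a Hilbert space with Σ = 2Π-1, and U a unitary with [Σ,U] Hilbert–Schmidt. Then ΠUΠ, viewed as an operator on the range of Π, is a Fredholm operator. -/
open ContinuousLinearMap

/-- A bounded operator is Fredholm if it has finite dimensional kernel,
closed range, and finite dimensional cokernel. -/
def IsFredholm {E : Type} [NormedAddCommGroup E] [NormedSpace ℂ E]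
    (T : E →L[ℂ] E) : Prop :=
  FiniteDimensional ℂ (LinearMap.ker (T : E →ₗ[ℂ] E)) ∧ IsClosed (LinearMap.range (T : E →ₗ[ℂ] E) : Set E) ∧
    FiniteDimensional ℂ (E ⧸ LinearMap.range (T : E →ₗ[ℂ] E))

/-!
On `E = ran Π` put `T = ΠUΠ` and `S = ΠU*Π`. With `D = [Π, U] = ½[Σ, U]` one has
`1 - ST = -ΠU*DΠ` and `1 - TS = ΠDU*Π`, so both defects lie in the operator-norm closure of
the finite-rank operators, because the Hilbert–Schmidt operator `D` does (Cauchy–Schwarz on the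
tail of `∑ ‖D eᵢ‖²`). If `‖K - F‖ < 1` with `F` of finite rank, then `1 - K = G - F` with
`G = 1 - (K - F)` invertible (Neumann series). Hence `G⁻¹S` is a left inverse of `T` modulo
finite rank, symmetrically `TS` yields a right one, and `T` is Fredholm.
-/

open scoped InnerProductSpace LinearMap.FiniteRangeSetoid

theorem Orthonormal.norm_tsum_inner_smul_le {ι 𝕜 H E : Type*} [RCLike 𝕜]
    [NormedAddCommGroup H] [InnerProductSpace 𝕜 H] [NormedAddCommGroup E] [NormedSpace 𝕜 E]
    {e : ι → H} (he : Orthonormal 𝕜 e) {v : ι → E} (hv : Summable fun i ↦ ‖v i‖ ^ 2) (x : H) :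
    ‖∑' i, ⟪e i, x⟫_𝕜 • v i‖ ≤ √(∑' i, ‖v i‖ ^ 2) * ‖x‖ := by
  obtain ⟨hsum, hCS⟩ := Real.summable_and_inner_le_Lp_mul_Lq_tsum_of_nonneg .two_two
    (f := fun i ↦ ‖⟪e i, x⟫_𝕜‖) (g := fun i ↦ ‖v i‖) (fun _ ↦ norm_nonneg _)
    (fun _ ↦ norm_nonneg _) (by simpa using he.inner_products_summable x) (by simpa using hv)
  have hBessel : √(∑' i, ‖⟪e i, x⟫_𝕜‖ ^ 2) ≤ ‖x‖ :=
    Real.sqrt_le_iff.2 ⟨norm_nonneg _, he.tsum_inner_products_le x⟩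
  calc ‖∑' i, ⟪e i, x⟫_𝕜 • v i‖ ≤ ∑' i, ‖⟪e i, x⟫_𝕜‖ * ‖v i‖ := by
        simpa only [norm_smul] using norm_tsum_le_tsum_norm (f := fun i ↦ ⟪e i, x⟫_𝕜 • v i)
          (by simpa only [norm_smul] using hsum)
    _ ≤ √(∑' i, ‖⟪e i, x⟫_𝕜‖ ^ 2) * √(∑' i, ‖v i‖ ^ 2) := by
        simpa [Real.sqrt_eq_rpow] using hCS
    _ ≤ √(∑' i, ‖v i‖ ^ 2) * ‖x‖ := by
        rw [mul_comm]
        gcongr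

namespace ContinuousLinearMap

variable {𝕜 E F G : Type*} [NontriviallyNormedField 𝕜]
  [NormedAddCommGroup E] [NormedSpace 𝕜 E] [NormedAddCommGroup F] [NormedSpace 𝕜 F]
  [NormedAddCommGroup G] [NormedSpace 𝕜 G]

def IsApproximable (K : E →L[𝕜] F) : Prop :=
  K ∈ closure {A : E →L[𝕜] F | (A : E →ₗ[𝕜] F).HasFiniteRange}

theorem IsApproximable.comp_left {K : E →L[𝕜] F} (hK : K.IsApproximable) (A : F →L[𝕜] G) :
    (A ∘L K).IsApproximable :=
  map_mem_closure (f := fun D : E →L[𝕜] F ↦ A ∘L D) (continuous_const.clm_comp continuous_id)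
    hK fun _ hB ↦ hB.comp_left _

theorem IsApproximable.comp_right {K : F →L[𝕜] G} (hK : K.IsApproximable) (B : E →L[𝕜] F) :
    (K ∘L B).IsApproximable :=
  map_mem_closure (f := fun D : F →L[𝕜] G ↦ D ∘L B) (continuous_id.clm_comp continuous_const)
    hK fun _ hA ↦ hA.comp_right _

theorem IsApproximable.const_smul {K : E →L[𝕜] F} (hK : K.IsApproximable) (c : 𝕜) :
    (c • K).IsApproximable :=
  map_mem_closure (continuous_const_smul c) hK fun _ hA ↦ hA.smul c

theorem IsApproximable.exists_one_sub_eq_units_sub [CompleteSpace E] {K : E →L[𝕜] E}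
    (hK : K.IsApproximable) :
    ∃ (G : (E →L[𝕜] E)ˣ) (A : E →L[𝕜] E), (A : E →ₗ[𝕜] E).HasFiniteRange ∧ 1 - K = G - A := by
  obtain ⟨A, hA, hdist⟩ := Metric.mem_closure_iff.1 hK 1 one_pos
  refine ⟨Units.oneSub (K - A) (by rwa [← dist_eq_norm]), A, hA, ?_⟩
  simp only [Units.val_oneSub]
  abel

theorem IsApproximable.exists_isLeftQuasiInverse [CompleteSpace E] {T : E →L[𝕜] F}
    {S : F →L[𝕜] E} (h : (1 - S ∘L T).IsApproximable) :
    ∃ L : F →L[𝕜] E, (L : F →ₗ[𝕜] E).IsLeftQuasiInverse T := by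
  obtain ⟨G, A, hA, hGA⟩ := h.exists_one_sub_eq_units_sub
  rw [sub_sub_cancel] at hGA
  refine ⟨↑G⁻¹ ∘L S, ?_⟩
  have hLT : (↑G⁻¹ : E →L[𝕜] E) * (S ∘L T) - 1 = -(↑G⁻¹ * A) := by
    rw [hGA, mul_sub, Units.inv_mul]
    abel
  rw [LinearMap.IsLeftQuasiInverse, LinearMap.FiniteRangeSetoid.equiv_iff_hasFiniteRange]
  change (((↑G⁻¹ : E →L[𝕜] E) * (S ∘L T) - 1 : E →L[𝕜] E) : E →ₗ[𝕜] E).HasFiniteRange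
  rw [hLT]
  exact (hA.comp_left _).neg

theorem IsApproximable.exists_isRightQuasiInverse [CompleteSpace F] {T : E →L[𝕜] F}
    {S : F →L[𝕜] E} (h : (1 - T ∘L S).IsApproximable) :
    ∃ R : F →L[𝕜] E, (R : F →ₗ[𝕜] E).IsRightQuasiInverse T := by
  obtain ⟨G, A, hA, hGA⟩ := h.exists_one_sub_eq_units_sub
  rw [sub_sub_cancel] at hGA
  refine ⟨S ∘L ↑G⁻¹, ?_⟩
  have hTR : T ∘L S * (↑G⁻¹ : F →L[𝕜] F) - 1 = -(A * ↑G⁻¹) := by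
    rw [hGA, sub_mul, Units.mul_inv]
    abel
  rw [LinearMap.IsRightQuasiInverse, LinearMap.FiniteRangeSetoid.equiv_iff_hasFiniteRange]
  change ((T ∘L S * (↑G⁻¹ : F →L[𝕜] F) - 1 : F →L[𝕜] F) : F →ₗ[𝕜] F).HasFiniteRange
  rw [hTR]
  exact (hA.comp_right _).neg

end ContinuousLinearMap

theorem LinearMap.IsLeftQuasiInverse.isQuasiInverse {R V W : Type*} [CommRing R]
    [AddCommGroup V] [Module R V] [AddCommGroup W] [Module R W] {T : V →ₗ[R] W}
    {L L' : W →ₗ[R] V} (hL : L.IsLeftQuasiInverse T) (hL' : L'.IsRightQuasiInverse T) :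
    L.IsQuasiInverse T := by
  have hLL' : L ≈ L' := calc
    L = L ∘ₗ .id := rfl
    _ ≈ L ∘ₗ (T ∘ₗ L') := by grw [hL'.equiv]
    _ = (L ∘ₗ T) ∘ₗ L' := rfl
    _ ≈ .id ∘ₗ L' := by grw [hL.equiv]
    _ = L' := rfl
  exact ⟨hL, hL'.congr hLL' (Setoid.refl _)⟩

theorem ContinuousLinearMap.IsFredholm.of_isApproximable_one_sub {𝕜 E F : Type*}
    [NontriviallyNormedField 𝕜] [CompleteSpace 𝕜] [NormedAddCommGroup E] [NormedSpace 𝕜 E]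
    [CompleteSpace E] [NormedAddCommGroup F] [NormedSpace 𝕜 F] [CompleteSpace F]
    {T : E →L[𝕜] F} {S : F →L[𝕜] E} (hST : (1 - S ∘L T).IsApproximable)
    (hTS : (1 - T ∘L S).IsApproximable) : T.IsFredholm := by
  obtain ⟨L, hL⟩ := hST.exists_isLeftQuasiInverse
  obtain ⟨L', hL'⟩ := hTS.exists_isRightQuasiInverse
  exact .of_isQuasiInverse (hL.isQuasiInverse hL')

theorem ContinuousLinearMap.IsFredholm.isFredholm {E : Type} [NormedAddCommGroup E]
    [NormedSpace ℂ E] {T : E →L[ℂ] E} (hT : T.IsFredholm) : _root_.IsFredholm T :=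
  ⟨hT.finite_ker, hT.isClosed_range, hT.finite_coker⟩

theorem IsHilbertSchmidt.isApproximable {H : Type} [NormedAddCommGroup H]
    [InnerProductSpace ℂ H] [CompleteSpace H] {C : H →L[ℂ] H} (hC : IsHilbertSchmidt C) :
    C.IsApproximable := by
  classical
  obtain ⟨ι, e, hsum⟩ := hC
  refine Metric.mem_closure_iff.2 fun ε hε ↦ ?_
  obtain ⟨s, hs⟩ := ((tendsto_order.1 (tendsto_tsum_compl_atTop_zero
    fun i ↦ ‖C (e i)‖ ^ 2)).2 _ (pow_pos hε 2)).exists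
  -- `F` truncates `C x = ∑ ⟪eᵢ, x⟫ C eᵢ` to `s`, outside of which `∑ ‖C eᵢ‖² < ε²`.
  let F : H →L[ℂ] H := ∑ i ∈ s, (innerSL ℂ (e i)).smulRight (C (e i))
  have hF : ∀ x, F x = ∑ i ∈ s, ⟪e i, x⟫_ℂ • C (e i) := fun x ↦ by simp [F]
  have hCF : ∀ x, (C - F) x = ∑' i : {i // i ∉ s}, ⟪e i, x⟫_ℂ • C (e i) := by
    intro x
    have hCx : HasSum (fun i ↦ ⟪e i, x⟫_ℂ • C (e i)) (C x) := by
      simpa [e.repr_apply_apply] using (e.hasSum_repr x).mapL C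
    rw [sub_apply, hF, ← hCx.tsum_eq, ← hCx.summable.sum_add_tsum_subtype_compl s,
      add_sub_cancel_left]
  refine ⟨F, ?_, ?_⟩
  · have hle : LinearMap.range (F : H →ₗ[ℂ] H) ≤ Submodule.span ℂ (s.image (C ∘ e)) := by
      rintro _ ⟨x, rfl⟩
      rw [coe_coe, hF]
      exact Submodule.sum_mem _ fun i hi ↦ Submodule.smul_mem _ _
        (Submodule.subset_span (Finset.mem_coe.2 (Finset.mem_image_of_mem _ hi)))
    exact (Submodule.fg_span (s.image (C ∘ e)).finite_toSet).of_le hle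
  · rw [dist_eq_norm]
    calc ‖C - F‖ ≤ √(∑' i : {i // i ∉ s}, ‖C (e i)‖ ^ 2) :=
          opNorm_le_bound _ (Real.sqrt_nonneg _) fun x ↦ hCF x ▸
            (e.orthonormal.comp _ Subtype.val_injective).norm_tsum_inner_smul_le
              (hsum.subtype _) x
      _ < ε := (Real.sqrt_lt' hε).2 hs

namespace Submodule

variable {𝕜 H : Type*} [RCLike 𝕜] [NormedAddCommGroup H] [InnerProductSpace 𝕜 H]
  (K : Submodule 𝕜 H) [K.HasOrthogonalProjection]

noncomputable def compress (X : H →L[𝕜] H) : K →L[𝕜] K :=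
  K.orthogonalProjectionOnto ∘L X ∘L K.subtypeL

theorem compress_one : K.compress 1 = 1 :=
  ContinuousLinearMap.ext K.orthogonalProjectionOnto_mem_subspace_eq_self

theorem compress_sub (X Y : H →L[𝕜] H) : K.compress (X - Y) = K.compress X - K.compress Y := by
  simp [compress, sub_comp, comp_sub]

theorem compress_mul_starProjection_mul (X Y : H →L[𝕜] H) :
    K.compress (X * K.starProjection * Y) = K.compress X ∘L K.compress Y :=
  rfl

theorem compress_mul_starProjection (X : H →L[𝕜] H) :
    K.compress (X * K.starProjection) = K.compress X := by
  rw [← mul_one (X * K.starProjection), compress_mul_starProjection_mul, compress_one]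
  exact comp_id _

theorem compress_starProjection_mul (X : H →L[𝕜] H) :
    K.compress (K.starProjection * X) = K.compress X := by
  rw [← one_mul (K.starProjection * X), ← mul_assoc, compress_mul_starProjection_mul,
    compress_one]
  exact id_comp _

theorem one_sub_compress_comp_compress_eq_neg_mul_lie {U V : H →L[𝕜] H} (hVU : V * U = 1) :
    1 - K.compress V ∘L K.compress U = K.compress (-V * ⁅K.starProjection, U⁆) := calc
  _ = K.compress (V * U * K.starProjection) - K.compress (V * K.starProjection * U) := by
    rw [K.compress_mul_starProjection, hVU, K.compress_one, K.compress_mul_starProjection_mul]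
  _ = _ := by
    rw [← K.compress_sub]
    exact congrArg K.compress (by rw [Ring.lie_def]; noncomm_ring)

theorem one_sub_compress_comp_compress_eq_lie_mul {U V : H →L[𝕜] H} (hUV : U * V = 1) :
    1 - K.compress U ∘L K.compress V = K.compress (⁅K.starProjection, U⁆ * V) := calc
  _ = K.compress (K.starProjection * U * V) - K.compress (U * K.starProjection * V) := by
    rw [mul_assoc, K.compress_starProjection_mul, hUV, K.compress_one,
      K.compress_mul_starProjection_mul]
  _ = _ := by
    rw [← K.compress_sub]
    exact congrArg K.compress (by rw [Ring.lie_def]; noncomm_ring)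

theorem _root_.ContinuousLinearMap.IsApproximable.compress_mul_mul {D : H →L[𝕜] H}
    (hD : D.IsApproximable) (X Y : H →L[𝕜] H) : (K.compress (X * D * Y)).IsApproximable :=
  (hD.comp_right (Y ∘L K.subtypeL)).comp_left (K.orthogonalProjectionOnto ∘L X)

end Submodule

theorem proj_unitary_fredholm
    {H : Type} [NormedAddCommGroup H] [InnerProductSpace ℂ H] [CompleteSpace H]
    (P U : H →L[ℂ] H) (hP : P * P = P) (hPsa : adjoint P = P)
    (hU : U * adjoint U = 1) (hU' : adjoint U * U = 1)
    (hHS : IsHilbertSchmidt ((2 • P - 1) * U - U * (2 • P - 1))) :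
    _root_.IsFredholm (((P * U).comp
        (Submodule.subtypeL (LinearMap.range (P : H →ₗ[ℂ] H)))).codRestrict
        (LinearMap.range (P : H →ₗ[ℂ] H))
        (fun x => by
          refine ⟨U x, ?_⟩
          rfl)) := by
  have hPstar : IsStarProjection P := ⟨hP, (star_eq_adjoint P).trans hPsa⟩
  obtain ⟨_, hPE⟩ := isStarProjection_iff_eq_starProjection_range.1 hPstar
  set E := LinearMap.range (P : H →ₗ[ℂ] H)
  have : CompleteSpace E := hPstar.isIdempotentElem.isClosed_range.completeSpace_coe
  rw [hPE] at hHS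
  have hD : ⁅E.starProjection, U⁆.IsApproximable := by
    have hC : (2 • E.starProjection - 1) * U - U * (2 • E.starProjection - 1) =
        (2 : ℂ) • ⁅E.starProjection, U⁆ := by
      simp only [Ring.lie_def, two_smul]
      noncomm_ring
    have := hHS.isApproximable.const_smul (2 : ℂ)⁻¹
    rwa [hC, smul_smul, inv_mul_cancel₀ two_ne_zero, one_smul] at this
  suffices _root_.IsFredholm (E.compress U) by
    convert this using 1
    ext x
    exact congr($hPE (U x))
  refine (IsFredholm.of_isApproximable_one_sub (S := E.compress (adjoint U)) ?_ ?_).isFredholm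
  · rw [E.one_sub_compress_comp_compress_eq_neg_mul_lie hU']
    simpa using hD.compress_mul_mul E (-adjoint U) 1
  · rw [E.one_sub_compress_comp_compress_eq_lie_mul hU]
    simpa using hD.compress_mul_mul E 1 (adjoint U)
end

section
/- For all real t > 0, q ∈ (0,1), d ∈ ℝ and integer p ∈ {0,1,2}, there is a universal constant c > 0 such that ∫_ℝ r^p · e^{-(r-d)²/((1-q)t)} · e^{-r²/(qt)} dr ≤ c · e^{-d²/t} · (1-q)^{1/2} q^{1/2} t^{1/2} (1 + t^{p/2}) · (1+|d|)^p. -/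
open Real MeasureTheory

private lemma aux_abs_pow_le {p : ℕ} (hp : p ≤ 2) (y : ℝ) :
    |y| ^ p ≤ 2 * Real.exp (y ^ 2 / 2) := by
  have h := Real.add_one_le_exp (y ^ 2 / 2)
  have he := Real.exp_pos (y ^ 2 / 2)
  interval_cases p
  · nlinarith
  · nlinarith [abs_nonneg y, sq_abs y]
  · nlinarith [sq_abs y]

private lemma aux_abs_add_pow_le {p : ℕ} (hp : p ≤ 2) (x m : ℝ) :
    |x + m| ^ p ≤ 4 * (|x| ^ p + |m| ^ p) := by
  interval_cases p
  · norm_num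
  · nlinarith [abs_add_le x m, abs_nonneg x, abs_nonneg m]
  · nlinarith [sq_abs (x + m), sq_abs x, sq_abs m, sq_nonneg (x - m),
      abs_nonneg x, abs_nonneg m]

private lemma aux_scaled {p : ℕ} (hp : p ≤ 2) {s : ℝ} (hs : 0 < s) (x : ℝ) :
    |x| ^ p * Real.exp (-x ^ 2 / s) ≤ 2 * Real.sqrt s ^ p * Real.exp (-x ^ 2 / (2 * s)) := by
  have hss : 0 < Real.sqrt s := Real.sqrt_pos.mpr hs
  have h1 : |x / Real.sqrt s| ^ p = |x| ^ p / Real.sqrt s ^ p := by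
    rw [abs_div, abs_of_nonneg (Real.sqrt_nonneg s), div_pow]
  have h2 : (x / Real.sqrt s) ^ 2 / 2 = x ^ 2 / (2 * s) := by
    rw [div_pow, Real.sq_sqrt hs.le]; ring
  have h3 := aux_abs_pow_le hp (x / Real.sqrt s)
  rw [h1, h2] at h3
  have h4 : |x| ^ p ≤ 2 * Real.sqrt s ^ p * Real.exp (x ^ 2 / (2 * s)) := by
    rw [div_le_iff₀ (by positivity)] at h3
    calc |x| ^ p ≤ 2 * Real.exp (x ^ 2 / (2 * s)) * Real.sqrt s ^ p := h3
      _ = 2 * Real.sqrt s ^ p * Real.exp (x ^ 2 / (2 * s)) := by ring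
  calc |x| ^ p * Real.exp (-x ^ 2 / s)
      ≤ (2 * Real.sqrt s ^ p * Real.exp (x ^ 2 / (2 * s))) * Real.exp (-x ^ 2 / s) :=
        mul_le_mul_of_nonneg_right h4 (Real.exp_pos _).le
    _ = 2 * Real.sqrt s ^ p * Real.exp (x ^ 2 / (2 * s) + -x ^ 2 / s) := by
        rw [Real.exp_add]; ring
    _ = 2 * Real.sqrt s ^ p * Real.exp (-x ^ 2 / (2 * s)) := by
        have : x ^ 2 / (2 * s) + -x ^ 2 / s = -x ^ 2 / (2 * s) := by
          field_simp; ring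
        rw [this]

theorem integral_pow_mul_two_gaussians_le :
    ∃ c : ℝ, 0 < c ∧ ∀ (t q d : ℝ) (p : ℕ), 0 < t → 0 < q → q < 1 → p ≤ 2 →
      ∫ r : ℝ, r ^ p * Real.exp (-(r - d) ^ 2 / ((1 - q) * t)) * Real.exp (-r ^ 2 / (q * t))
        ≤ c * Real.exp (-d ^ 2 / t) * (1 - q) ^ (1/2 : ℝ) * q ^ (1/2 : ℝ) * t ^ (1/2 : ℝ)
            * (1 + t ^ (p / 2 : ℝ)) * (1 + |d|) ^ p := by
  refine ⟨64, by norm_num, ?_⟩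
  intro t q d p ht hq hq1 hp
  have h1q : 0 < 1 - q := by linarith
  have ht0 : t ≠ 0 := ne_of_gt ht
  have hq0 : q ≠ 0 := ne_of_gt hq
  have h1q0 : (1 - q) ≠ 0 := ne_of_gt h1q
  set s : ℝ := q * (1 - q) * t with hs_def
  have hs : 0 < s := by positivity
  have hs0 : s ≠ 0 := ne_of_gt hs
  set μ : ℝ := q * d with hμ_def
  -- pointwise identity: merge the two gaussians
  have key : ∀ r : ℝ,
      r ^ p * Real.exp (-(r - d) ^ 2 / ((1 - q) * t)) * Real.exp (-r ^ 2 / (q * t))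
      = Real.exp (-d ^ 2 / t) * (r ^ p * Real.exp (-(r - μ) ^ 2 / s)) := by
    intro r
    have e0 : Real.exp (-(r - d) ^ 2 / ((1 - q) * t)) * Real.exp (-r ^ 2 / (q * t))
        = Real.exp (-d ^ 2 / t) * Real.exp (-(r - μ) ^ 2 / s) := by
      rw [← Real.exp_add, ← Real.exp_add]
      congr 1
      rw [hμ_def, hs_def]
      field_simp
      ring
    rw [mul_assoc, e0]; ring
  rw [show (∫ r : ℝ, r ^ p * Real.exp (-(r - d) ^ 2 / ((1 - q) * t)) * Real.exp (-r ^ 2 / (q * t)))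
      = ∫ r : ℝ, Real.exp (-d ^ 2 / t) * (r ^ p * Real.exp (-(r - μ) ^ 2 / s)) from by
        congr 1; funext r; exact key r]
  rw [MeasureTheory.integral_const_mul]
  -- translate
  have htrans : (∫ x : ℝ, (x + μ) ^ p * Real.exp (-x ^ 2 / s))
      = ∫ r : ℝ, r ^ p * Real.exp (-(r - μ) ^ 2 / s) := by
    have h : (∫ x : ℝ, (fun r : ℝ => r ^ p * Real.exp (-(r - μ) ^ 2 / s)) (x + μ))
        = ∫ r : ℝ, r ^ p * Real.exp (-(r - μ) ^ 2 / s) :=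
      integral_add_right_eq_self (μ := (volume : Measure ℝ))
        (fun r : ℝ => r ^ p * Real.exp (-(r - μ) ^ 2 / s)) μ
    simpa using h
  rw [← htrans]
  -- integrability machinery
  have ib2 : Integrable (fun x : ℝ => Real.exp (-(1/(2*s)) * x ^ 2)) :=
    integrable_exp_neg_mul_sq (by positivity)
  have ib1 : Integrable (fun x : ℝ => Real.exp (-(1/s) * x ^ 2)) :=
    integrable_exp_neg_mul_sq (by positivity)
  have eb2 : ∀ x : ℝ, Real.exp (-x ^ 2 / (2*s)) = Real.exp (-(1/(2*s)) * x ^ 2) := by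
    intro x; congr 1; field_simp
  have eb1 : ∀ x : ℝ, Real.exp (-x ^ 2 / s) = Real.exp (-(1/s) * x ^ 2) := by
    intro x; congr 1; field_simp
  set h : ℝ → ℝ := fun x =>
    8 * Real.sqrt s ^ p * Real.exp (-x ^ 2 / (2*s)) + 4 * |μ| ^ p * Real.exp (-x ^ 2 / s)
    with hh_def
  have ih : Integrable h := by
    simp only [hh_def, eb1, eb2]
    exact (ib2.const_mul _).add (ib1.const_mul _)
  have hbound : ∀ x : ℝ, |(x + μ) ^ p * Real.exp (-x ^ 2 / s)| ≤ h x := by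
    intro x
    rw [abs_mul, abs_of_nonneg (Real.exp_pos _).le, abs_pow]
    calc |x + μ| ^ p * Real.exp (-x ^ 2 / s)
        ≤ (4 * (|x| ^ p + |μ| ^ p)) * Real.exp (-x ^ 2 / s) :=
          mul_le_mul_of_nonneg_right (aux_abs_add_pow_le hp x μ) (Real.exp_pos _).le
      _ = 4 * (|x| ^ p * Real.exp (-x ^ 2 / s)) + 4 * |μ| ^ p * Real.exp (-x ^ 2 / s) := by ring
      _ ≤ h x := by
          have h5 := aux_scaled hp hs x
          simp only [hh_def]
          nlinarith [h5]
  have ig : Integrable (fun x : ℝ => (x + μ) ^ p * Real.exp (-x ^ 2 / s)) := by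
    refine ih.mono' ?_ (Filter.Eventually.of_forall fun x => ?_)
    · have cg : Continuous fun x : ℝ => (x + μ) ^ p * Real.exp (-x ^ 2 / s) :=
        ((continuous_id.add continuous_const).pow p).mul
          (Real.continuous_exp.comp ((continuous_pow 2).neg.div_const s))
      exact cg.aestronglyMeasurable
    · rw [Real.norm_eq_abs]; exact hbound x
  have hI : (∫ x : ℝ, (x + μ) ^ p * Real.exp (-x ^ 2 / s)) ≤ ∫ x, h x :=
    integral_mono ig ih (fun x => (le_abs_self _).trans (hbound x))
  -- value of ∫ h
  have hIh : (∫ x, h x)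
      = 8 * Real.sqrt s ^ p * Real.sqrt (π * (2*s)) + 4 * |μ| ^ p * Real.sqrt (π * s) := by
    simp only [hh_def, eb1, eb2]
    rw [integral_add (ib2.const_mul _) (ib1.const_mul _),
      MeasureTheory.integral_const_mul, MeasureTheory.integral_const_mul,
      integral_gaussian, integral_gaussian,
      show π / (1/(2*s)) = π * (2*s) by field_simp,
      show π / (1/s) = π * s by field_simp]
  -- bounds on sqrt terms
  have hsqrt4 : Real.sqrt 4 = 2 := by
    rw [show (4:ℝ) = 2 ^ 2 by norm_num]
    exact Real.sqrt_sq (by norm_num)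
  have hsqrt9 : Real.sqrt 9 = 3 := by
    rw [show (9:ℝ) = 3 ^ 2 by norm_num]
    exact Real.sqrt_sq (by norm_num)
  have hsq2 : Real.sqrt (π * (2*s)) ≤ 3 * Real.sqrt s := by
    rw [show π * (2*s) = (2*π) * s by ring, Real.sqrt_mul (by positivity)]
    have h9 : Real.sqrt (2*π) ≤ 3 := by
      rw [← hsqrt9]
      exact Real.sqrt_le_sqrt (by nlinarith [Real.pi_le_four])
    nlinarith [Real.sqrt_nonneg s, Real.sqrt_nonneg (2*π)]
  have hsq1 : Real.sqrt (π * s) ≤ 2 * Real.sqrt s := by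
    rw [Real.sqrt_mul (by positivity)]
    have h4 : Real.sqrt π ≤ 2 := by
      rw [← hsqrt4]
      exact Real.sqrt_le_sqrt (by nlinarith [Real.pi_le_four])
    nlinarith [Real.sqrt_nonneg s, Real.sqrt_nonneg π]
  have hItotal : (∫ x, h x) ≤ 32 * Real.sqrt s * (Real.sqrt s ^ p + |μ| ^ p) := by
    rw [hIh]
    have hA : (0:ℝ) ≤ Real.sqrt s ^ p := by positivity
    have hB : (0:ℝ) ≤ |μ| ^ p := by positivity
    nlinarith [hsq2, hsq1, Real.sqrt_nonneg s]
  -- rewrite the rpow factors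
  have hrpow : (1 - q) ^ (1/2:ℝ) * q ^ (1/2:ℝ) * t ^ (1/2:ℝ) = Real.sqrt s := by
    rw [← Real.sqrt_eq_rpow, ← Real.sqrt_eq_rpow, ← Real.sqrt_eq_rpow, hs_def,
      show q * (1-q) * t = (1-q) * (q * t) by ring,
      Real.sqrt_mul h1q.le, Real.sqrt_mul hq.le, mul_assoc]
  have htp : t ^ ((p:ℝ) / 2) = Real.sqrt t ^ p := by
    rw [Real.sqrt_eq_rpow, ← Real.rpow_natCast (t ^ (1/2:ℝ)) p, ← Real.rpow_mul ht.le]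
    congr 1; ring
  -- final comparison
  have key2 : Real.sqrt s ^ p + |μ| ^ p
      ≤ 2 * ((1 + Real.sqrt t ^ p) * (1 + |d|) ^ p) := by
    have hA : Real.sqrt s ^ p ≤ Real.sqrt t ^ p := by
      apply pow_le_pow_left₀ (Real.sqrt_nonneg s)
      apply Real.sqrt_le_sqrt
      rw [hs_def]; nlinarith [mul_nonneg ht.le (sq_nonneg (q - 1/2))]
    have hB : |μ| ^ p ≤ (1 + |d|) ^ p := by
      apply pow_le_pow_left₀ (abs_nonneg μ)
      rw [hμ_def, abs_mul, abs_of_pos hq]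
      nlinarith [abs_nonneg d]
    have hD1 : (1:ℝ) ≤ (1 + |d|) ^ p := by
      have := pow_le_pow_left₀ (zero_le_one) (by linarith [abs_nonneg d] : (1:ℝ) ≤ 1 + |d|) p
      simpa using this
    have hT0 : (0:ℝ) ≤ Real.sqrt t ^ p := by positivity
    have h1 : Real.sqrt s ^ p ≤ (1 + Real.sqrt t ^ p) * (1 + |d|) ^ p := by
      calc Real.sqrt s ^ p ≤ Real.sqrt t ^ p := hA
        _ = Real.sqrt t ^ p * 1 := (mul_one _).symm
        _ ≤ (1 + Real.sqrt t ^ p) * (1 + |d|) ^ p :=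
            mul_le_mul (by linarith) hD1 zero_le_one (by linarith)
    have h2 : |μ| ^ p ≤ (1 + Real.sqrt t ^ p) * (1 + |d|) ^ p := by
      calc |μ| ^ p ≤ (1 + |d|) ^ p := hB
        _ = 1 * (1 + |d|) ^ p := (one_mul _).symm
        _ ≤ (1 + Real.sqrt t ^ p) * (1 + |d|) ^ p :=
            mul_le_mul_of_nonneg_right (by linarith) (by positivity)
    linarith [h1, h2]
  have hE : (0:ℝ) ≤ Real.exp (-d ^ 2 / t) := (Real.exp_pos _).le
  calc Real.exp (-d ^ 2 / t) * (∫ x : ℝ, (x + μ) ^ p * Real.exp (-x ^ 2 / s))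
      ≤ Real.exp (-d ^ 2 / t) * (32 * Real.sqrt s * (Real.sqrt s ^ p + |μ| ^ p)) :=
        mul_le_mul_of_nonneg_left (hI.trans hItotal) hE
    _ ≤ Real.exp (-d ^ 2 / t)
        * (32 * Real.sqrt s * (2 * ((1 + Real.sqrt t ^ p) * (1 + |d|) ^ p))) := by
        apply mul_le_mul_of_nonneg_left _ hE
        exact mul_le_mul_of_nonneg_left key2 (by positivity)
    _ = 64 * Real.exp (-d ^ 2 / t) * ((1 - q) ^ (1/2:ℝ) * q ^ (1/2:ℝ) * t ^ (1/2:ℝ))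
        * (1 + t ^ ((p:ℝ) / 2)) * (1 + |d|) ^ p := by
        rw [hrpow, htp]; ring
    _ = 64 * Real.exp (-d ^ 2 / t) * (1 - q) ^ (1/2:ℝ) * q ^ (1/2:ℝ) * t ^ (1/2:ℝ)
        * (1 + t ^ ((p:ℝ) / 2)) * (1 + |d|) ^ p := by ring
end
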